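/- arXiv:1909.13811 — 2 statements merged into one kernel-verified Lean document; each statement's English description precedes it below -/
import Mathlib

section
/- Let (X,d) be a geodesic metric space, let γ: [0,∞) → X and ξ: [0,∞) → X be unit-speed geodesic rays, and suppose there is s > 0 such that for all t ≥ s, the point ξ(t) lies within distance 1/2 of the image of γ. Let T ⊆ X be a closed subset ('thick part') and let T' ⊆ X be a subset containing the 1-neighbourhood of T. If for all large t the proportion of time [γ(0), γ(t)] spends in T is at least θ' > θ, then for all sufficiently large t the proportion of time [ξ(0), ξ(t)] spends in T' is at least θ. -/
open MeasureTheory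

/-- transfer of thickness proportions from a geodesic ray `γ` to a geodesic ray
`ξ` which eventually stays within distance `1/2` of the image of `γ`: if `[γ(0), γ(t)]` spends
at least proportion `θ' > θ` of its time in a closed set `T` for all large `t`, then
`[ξ(0), ξ(t)]` spends at least proportion `θ` of its time in any set `T'` containing the
`1`-neighbourhood of `T`, for all sufficiently large `t`. -/
theorem stmt9 {X : Type*} [MetricSpace X] (γ ξ : ℝ → X)
    (hγ : ∀ s t : ℝ, 0 ≤ s → 0 ≤ t → dist (γ s) (γ t) = |s - t|)
    (hξ : ∀ s t : ℝ, 0 ≤ s → 0 ≤ t → dist (ξ s) (ξ t) = |s - t|)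
    (s : ℝ) (hs : 0 < s)
    (hfellow : ∀ t ≥ s, ∃ u ≥ (0 : ℝ), dist (ξ t) (γ u) ≤ 1 / 2)
    (T T' : Set X) (hT : IsClosed T)
    (hT' : ∀ z : X, (∃ w ∈ T, dist z w ≤ 1) → z ∈ T')
    (θ θ' : ℝ) (hθpos : 0 < θ) (hθ : θ < θ')
    (hthick : ∃ t0 > (0 : ℝ), ∀ t ≥ t0,
      θ' * t ≤ (volume {u ∈ Set.Icc (0 : ℝ) t | γ u ∈ T}).toReal) :
    ∃ t1 > (0 : ℝ), ∀ t ≥ t1,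
      θ * t ≤ (volume {u ∈ Set.Icc (0 : ℝ) t | ξ u ∈ T'}).toReal := by
  obtain ⟨t0, ht0pos, hthick⟩ := hthick
  set ρ : ℝ → ℝ := fun τ => dist (ξ τ) (γ 0) with hρdef
  set K : ℝ := dist (ξ 0) (γ 0) with hKdef
  have hK0 : 0 ≤ K := dist_nonneg
  have hρnonneg : ∀ τ, 0 ≤ ρ τ := fun τ => dist_nonneg
  have hθ'pos : 0 < θ' := hθpos.trans hθ
  have hst : 0 < θ' - θ := sub_pos.mpr hθ
  -- ρ is 1-Lipschitz on nonnegative reals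
  have hρlip : ∀ a b : ℝ, 0 ≤ a → 0 ≤ b → dist (ρ a) (ρ b) ≤ dist a b := by
    intro a b ha hb
    have h1 : |dist (ξ a) (γ 0) - dist (ξ b) (γ 0)| ≤ dist (ξ a) (ξ b) :=
      abs_dist_sub_le _ _ _
    rw [hξ a b ha hb] at h1
    simpa [hρdef, Real.dist_eq] using h1
  set t1 : ℝ := max (max (s + 2 * K + 3) (t0 + K + 1))
      ((θ' * K + (s + K)) / (θ' - θ) + 1) with ht1def
  have ht1pos : 0 < t1 := by
    have h1 : 0 < s + 2 * K + 3 := by linarith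
    exact lt_of_lt_of_le h1 (le_trans (le_max_left _ _) (le_max_left _ _))
  refine ⟨t1, ht1pos, ?_⟩
  intro L hL
  have hLA : s + 2 * K + 3 ≤ L :=
    le_trans (le_trans (le_max_left _ _) (le_max_left _ _)) hL
  have hLB : t0 + K + 1 ≤ L :=
    le_trans (le_trans (le_max_right _ _) (le_max_left _ _)) hL
  have hLC : (θ' * K + (s + K)) / (θ' - θ) + 1 ≤ L :=
    le_trans (le_max_right _ _) hL
  have hsL : s ≤ L := by linarith
  have hL0 : 0 ≤ L := le_trans hs.le hsL
  have hLpos : 0 < L := lt_of_lt_of_le hs hsL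
  -- basic estimates on ρ
  have hρs_le : ρ s ≤ s + K := by
    have h1 := dist_triangle (ξ s) (ξ 0) (γ 0)
    rw [hξ s 0 hs.le le_rfl] at h1
    have h2 : |s - 0| = s := by rw [sub_zero, abs_of_nonneg hs.le]
    rw [h2] at h1
    simpa [hρdef, hKdef] using h1
  have hρL_ge : L - K ≤ ρ L := by
    have h1 := dist_triangle (ξ L) (γ 0) (ξ 0)
    have h2 : dist (ξ L) (ξ 0) = L := by
      rw [hξ L 0 hL0 le_rfl, sub_zero, abs_of_nonneg hL0]
    rw [dist_comm (γ 0) (ξ 0)] at h1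
    rw [h2] at h1
    have h3 : dist (ξ L) (γ 0) = ρ L := by simp [hρdef]
    rw [h3] at h1
    simpa [hKdef] using by linarith
  have hρsρL : ρ s ≤ ρ L := by linarith
  have hρLt0 : t0 ≤ ρ L := by linarith
  -- the good set
  set G : Set ℝ := {τ ∈ Set.Icc s L | γ (ρ τ) ∈ T} with hGdef
  -- every point of G is a time when ξ lies in T'
  have hGsub : G ⊆ {u ∈ Set.Icc (0 : ℝ) L | ξ u ∈ T'} := by
    rintro τ ⟨⟨hτs, hτL⟩, hτT⟩
    refine ⟨⟨le_trans hs.le hτs, hτL⟩, ?_⟩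
    obtain ⟨u, hu0, hud⟩ := hfellow τ hτs
    refine hT' _ ⟨γ (ρ τ), hτT, ?_⟩
    have h1 : dist (ξ τ) (γ (ρ τ)) ≤ dist (ξ τ) (γ u) + dist (γ u) (γ (ρ τ)) :=
      dist_triangle _ _ _
    have h2 : dist (γ u) (γ (ρ τ)) = |u - ρ τ| := hγ u (ρ τ) hu0 (hρnonneg τ)
    have h4 : dist (γ u) (γ 0) = u := by
      rw [hγ u 0 hu0 le_rfl, sub_zero, abs_of_nonneg hu0]
    have h5 : |dist (γ u) (γ 0) - dist (ξ τ) (γ 0)| ≤ dist (γ u) (ξ τ) :=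
      abs_dist_sub_le _ _ _
    rw [h4, dist_comm (γ u) (ξ τ)] at h5
    have h6 : |u - ρ τ| ≤ 1 / 2 := by
      have : |u - ρ τ| = |u - dist (ξ τ) (γ 0)| := by simp [hρdef]
      rw [this]
      exact le_trans h5 hud
    rw [h2] at h1
    linarith
  -- ρ is Lipschitz on [s, L]
  have hρlipOn : LipschitzOnWith 1 ρ (Set.Icc s L) := by
    apply LipschitzOnWith.of_dist_le_mul
    intro x hx y hy
    rw [NNReal.coe_one, one_mul]
    exact hρlip x y (le_trans hs.le hx.1) (le_trans hs.le hy.1)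
  have hρcont : ContinuousOn ρ (Set.Icc s L) := hρlipOn.continuousOn
  have hIVT : Set.Icc (ρ s) (ρ L) ⊆ ρ '' Set.Icc s L :=
    intermediate_value_Icc hsL hρcont
  -- the thick part of γ between ρ s and ρ L is in the ρ-image of G
  have hBsub : {u ∈ Set.Icc (ρ s) (ρ L) | γ u ∈ T} ⊆ ρ '' G := by
    rintro w ⟨hwmem, hwT⟩
    obtain ⟨τ, hτmem, hτw⟩ := hIVT hwmem
    exact ⟨τ, ⟨hτmem, by rw [hτw]; exact hwT⟩, hτw⟩
  -- Lipschitz maps do not increase 1-dimensional measure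
  have himg : volume (ρ '' G) ≤ volume G := by
    have hlip : LipschitzOnWith 1 ρ G := hρlipOn.mono fun τ hτ => hτ.1
    have h := hlip.hausdorffMeasure_image_le (zero_le_one (α := ℝ))
    rw [MeasureTheory.hausdorffMeasure_real] at h
    simpa using h
  -- covering the thick set
  have hcover : {u ∈ Set.Icc (0 : ℝ) (ρ L) | γ u ∈ T} ⊆
      {u ∈ Set.Icc (ρ s) (ρ L) | γ u ∈ T} ∪ Set.Icc (0 : ℝ) (ρ s) := by
    rintro w ⟨⟨hw0, hwL⟩, hwT⟩
    by_cases h : ρ s ≤ w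
    · exact Or.inl ⟨⟨h, hwL⟩, hwT⟩
    · exact Or.inr ⟨hw0, le_of_not_ge h⟩
  -- measure estimates
  have hIccfin : volume (Set.Icc (0 : ℝ) (ρ L)) ≠ ⊤ := by
    rw [Real.volume_Icc]; exact ENNReal.ofReal_ne_top
  have hXfin : volume {u ∈ Set.Icc (0 : ℝ) (ρ L) | γ u ∈ T} ≠ ⊤ :=
    ne_top_of_le_ne_top hIccfin (measure_mono (Set.sep_subset _ _))
  have hthickL := hthick (ρ L) hρLt0
  have hlow : ENNReal.ofReal (θ' * ρ L) ≤
      volume {u ∈ Set.Icc (0 : ℝ) (ρ L) | γ u ∈ T} := by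
    rw [ENNReal.ofReal_le_iff_le_toReal hXfin]
    exact hthickL
  have hIccρs : volume (Set.Icc (0 : ℝ) (ρ s)) = ENNReal.ofReal (ρ s) := by
    rw [Real.volume_Icc, sub_zero]
  have hchain : ENNReal.ofReal (θ' * ρ L) ≤ volume G + ENNReal.ofReal (ρ s) := by
    calc ENNReal.ofReal (θ' * ρ L)
        ≤ volume {u ∈ Set.Icc (0 : ℝ) (ρ L) | γ u ∈ T} := hlow
      _ ≤ volume ({u ∈ Set.Icc (ρ s) (ρ L) | γ u ∈ T} ∪ Set.Icc (0 : ℝ) (ρ s)) :=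
          measure_mono hcover
      _ ≤ volume {u ∈ Set.Icc (ρ s) (ρ L) | γ u ∈ T} +
            volume (Set.Icc (0 : ℝ) (ρ s)) := measure_union_le _ _
      _ ≤ volume (ρ '' G) + ENNReal.ofReal (ρ s) := by
          rw [hIccρs]
          exact add_le_add_left (measure_mono hBsub) _
      _ ≤ volume G + ENNReal.ofReal (ρ s) := add_le_add_left himg _
  -- arithmetic: θ * L + ρ s ≤ θ' * ρ L
  have hdiv : θ' * K + (s + K) ≤ (θ' - θ) * (L - 1) := by
    have h1 : (θ' * K + (s + K)) / (θ' - θ) ≤ L - 1 := by linarith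
    calc θ' * K + (s + K) = (θ' * K + (s + K)) / (θ' - θ) * (θ' - θ) := by
          field_simp
      _ ≤ (L - 1) * (θ' - θ) := by
          apply mul_le_mul_of_nonneg_right h1 hst.le
      _ = (θ' - θ) * (L - 1) := by ring
  have hf1 : θ' * (L - K) ≤ θ' * ρ L := mul_le_mul_of_nonneg_left hρL_ge hθ'pos.le
  have harith : θ * L + ρ s ≤ θ' * ρ L := by nlinarith [hρs_le, hst.le]
  -- conclude
  have hGle : ENNReal.ofReal (θ * L) ≤ volume G := by
    have h2 : ENNReal.ofReal (θ * L + ρ s) ≤ volume G + ENNReal.ofReal (ρ s) :=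
      le_trans (ENNReal.ofReal_le_ofReal harith) hchain
    rw [ENNReal.ofReal_add (le_of_lt (mul_pos hθpos hLpos)) (hρnonneg s)] at h2
    exact (ENNReal.add_le_add_iff_right ENNReal.ofReal_ne_top).mp h2
  have hfinal : ENNReal.ofReal (θ * L) ≤
      volume {u ∈ Set.Icc (0 : ℝ) L | ξ u ∈ T'} :=
    le_trans hGle (measure_mono hGsub)
  have hSfin : volume {u ∈ Set.Icc (0 : ℝ) L | ξ u ∈ T'} ≠ ⊤ := by
    refine ne_top_of_le_ne_top ?_ (measure_mono (Set.sep_subset _ _))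
    rw [Real.volume_Icc]; exact ENNReal.ofReal_ne_top
  calc θ * L = (ENNReal.ofReal (θ * L)).toReal := by
        rw [ENNReal.toReal_ofReal (le_of_lt (mul_pos hθpos hLpos))]
    _ ≤ (volume {u ∈ Set.Icc (0 : ℝ) L | ξ u ∈ T'}).toReal :=
        ENNReal.toReal_mono hSfin hfinal
end

section
/- In the real hyperbolic plane ℍ² (or ℍⁿ), for the spheres S_r(x) equipped with the natural rotation-invariant probability measures ν_r, the statistical hyperbolicity index E(ℍⁿ) = lim_{r→∞} (1/r) ∫∫_{S_r(x)×S_r(x)} d(x',x'') dν_r dν_r equals 2. -/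
open MeasureTheory Filter UpperHalfPlane

/-!
Write the sphere of radius `r` about `x` as the orbit `θ ↦ sphereParam x r θ` of a point under
the rotations about `x`; two of its points at parameter distance `φ` satisfy
`cosh d = 1 + 2 sinh² r sin² φ`. Rotation invariance makes each of `N` consecutive arcs of
length `π / N` carry mass at most `1 / N`. Since `cosh ((2 - 1/N) r) ≤ 2 sinh² r sin² (π / N)`
for large `r`, the points of the sphere closer than `(2 - 1/N) r` to a given one lie in two such
arcs, so by Fubini and Markov `∫∫ d ≥ (2 - 1/N) r (1 - 2/N)`; the triangle inequality gives
`∫∫ d ≤ 2 r`.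
-/

open Real Matrix
open scoped MatrixGroups

theorem Real.cos_sq_add_mul_sin_sq_pos {c : ℝ} (hc : 0 < c) (θ : ℝ) :
    0 < cos θ ^ 2 + c * sin θ ^ 2 := by
  rcases eq_or_ne (sin θ) 0 with h | h
  · rw [cos_sq', h]; norm_num
  · positivity

theorem Real.sin_le_sin_of_le_of_le_pi_sub {a b : ℝ} (ha : 0 ≤ a) (hab : a ≤ b) (hb : b ≤ π - a) :
    sin a ≤ sin b := by
  rcases le_total b (π / 2) with hb2 | hb2
  · exact sin_le_sin_of_le_of_le_pi_div_two (by linarith [pi_pos]) hb2 hab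
  · rw [← sin_pi_sub b]
    exact sin_le_sin_of_le_of_le_pi_div_two (by linarith [pi_pos]) (by linarith) (by linarith)

theorem Real.eventually_cosh_mul_le_mul_sinh_sq {a c : ℝ} (ha : |a| < 2) (hc : 0 < c) :
    ∀ᶠ r in atTop, cosh (a * r) ≤ c * sinh r ^ 2 := by
  have h1 : (fun r ↦ exp (|a| * r)) =o[atTop] fun r ↦ exp (2 * r) :=
    isLittleO_exp_comp_exp_comp.2 <| by
      simpa only [← sub_mul, id] using tendsto_id.const_mul_atTop (sub_pos.2 ha)
  have h2 : (fun _ ↦ (1 : ℝ)) =o[atTop] fun r ↦ exp (2 * r) :=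
    isLittleO_one_exp_comp.2 (tendsto_id.const_mul_atTop two_pos)
  filter_upwards [(h1.add (h2.const_mul_left (c / 2))).def (by positivity : 0 < c / 4),
    eventually_ge_atTop 0] with r hr hr0
  rw [norm_of_nonneg (by positivity), norm_of_nonneg (by positivity)] at hr
  have hcosh : cosh (a * r) ≤ exp (|a| * r) := by
    rw [← cosh_abs, abs_mul, abs_of_nonneg hr0, cosh_eq]
    have : exp (-(|a| * r)) ≤ exp (|a| * r) := exp_le_exp.2 (by nlinarith [abs_nonneg a])
    linarith
  have hsinh : exp (2 * r) - 2 ≤ 4 * sinh r ^ 2 := by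
    rw [sinh_eq, two_mul, exp_add, exp_neg]
    have := exp_pos r
    field_simp
    nlinarith [sq_nonneg (exp r), inv_pos.2 this]
  nlinarith

open scoped ENNReal in
theorem MeasureTheory.measure_le_inv_of_pairwiseDisjoint {α : Type*} [MeasurableSpace α]
    {μ : Measure α} [IsProbabilityMeasure μ] {s : ℕ → Set α} {N : ℕ}
    (hs : ∀ j < N, MeasurableSet (s j)) (hd : (↑(Finset.range N) : Set ℕ).PairwiseDisjoint s)
    (heq : ∀ j < N, μ (s j) = μ (s 0)) : μ (s 0) ≤ (N : ℝ≥0∞)⁻¹ := by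
  rw [ENNReal.le_inv_iff_mul_le, mul_comm]
  calc (N : ℝ≥0∞) * μ (s 0) = ∑ j ∈ Finset.range N, μ (s j) := by
        rw [Finset.sum_congr rfl fun j hj ↦ heq j (Finset.mem_range.1 hj), Finset.sum_const,
          Finset.card_range, nsmul_eq_mul]
    _ = μ (⋃ j ∈ Finset.range N, s j) :=
        (measure_biUnion_finset hd fun j hj ↦ hs j (Finset.mem_range.1 hj)).symm
    _ ≤ 1 := prob_le_one

namespace UpperHalfPlane

noncomputable section

/-- Acts on `ℍ` as the rotation about `I` by the angle `2θ`, hence with period `π` in `θ`. -/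
def rotation (θ : ℝ) : SL(2, ℝ) :=
  ⟨!![cos θ, sin θ; -sin θ, cos θ], by
    simp [det_fin_two_of]
    linear_combination sin_sq_add_cos_sq θ⟩

lemma rotation_add (a b : ℝ) : rotation (a + b) = rotation a * rotation b := by
  refine Matrix.SpecialLinearGroup.ext _ _ fun i j ↦ ?_
  rw [Matrix.SpecialLinearGroup.coe_mul]
  simp only [rotation, mul_fin_two]
  fin_cases i <;> fin_cases j <;> simp [cos_add, sin_add] <;> ring

lemma continuous_rotation : Continuous rotation := by
  refine continuous_induced_rng.2 ?_
  show Continuous fun θ : ℝ ↦ !![cos θ, sin θ; -sin θ, cos θ]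
  fun_prop

lemma rotation_denom_ne_zero (θ : ℝ) (z : ℍ) : (-sin θ * z + cos θ : ℂ) ≠ 0 := by
  have h : ![-sin θ, cos θ] ≠ 0 := fun h0 ↦ by
    have h1 : -sin θ = 0 := congrFun h0 0
    have h2 : cos θ = 0 := congrFun h0 1
    nlinarith [sin_sq_add_cos_sq θ]
  simpa using linear_ne_zero (cd := ![-sin θ, cos θ]) z h

lemma coe_rotation_smul (θ : ℝ) (z : ℍ) :
    ((rotation θ • z : ℍ) : ℂ) = (cos θ * z + sin θ) / (-sin θ * z + cos θ) := by
  rw [specialLinearGroup_apply]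
  simp [rotation]

lemma rotation_smul_I (θ : ℝ) : rotation θ • I = I := by
  ext
  rw [coe_rotation_smul, coe_I, div_eq_iff (by simpa using rotation_denom_ne_zero θ I)]
  simp [Complex.ext_iff]

def expI (r : ℝ) : ℍ :=
  mk (exp r * Complex.I) (by rw [Complex.im_ofReal_mul, Complex.I_im, mul_one]; exact exp_pos r)

lemma coe_expI (r : ℝ) : (expI r : ℂ) = exp r * Complex.I := rfl

@[simp] lemma expI_re (r : ℝ) : (expI r).re = 0 := by
  rw [← coe_re, coe_expI, Complex.re_ofReal_mul, Complex.I_re, mul_zero]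

@[simp] lemma expI_im (r : ℝ) : (expI r).im = exp r := by
  rw [← coe_im, coe_expI, Complex.im_ofReal_mul, Complex.I_im, mul_one]

lemma dist_I_expI {r : ℝ} (hr : 0 ≤ r) : dist I (expI r) = r := by
  rw [dist_of_re_eq (by simp), I_im, expI_im, log_one, log_exp, dist_zero_left, norm_of_nonneg hr]

lemma coe_rotation_smul_expI (r θ : ℝ) : ((rotation θ • expI r : ℍ) : ℂ) =
    ((1 - exp r ^ 2) * sin θ * cos θ + exp r * Complex.I) /
      (cos θ ^ 2 + exp r ^ 2 * sin θ ^ 2 : ℝ) := by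
  rw [coe_rotation_smul, div_eq_div_iff (rotation_denom_ne_zero θ (expI r))
    (by exact_mod_cast (cos_sq_add_mul_sin_sq_pos (by positivity) θ).ne')]
  have hsc : (sin θ : ℂ) ^ 2 + (cos θ : ℂ) ^ 2 = 1 := by exact_mod_cast sin_sq_add_cos_sq θ
  push_cast [-Complex.ofReal_sin, -Complex.ofReal_cos, -Complex.ofReal_exp, coe_expI]
  linear_combination ((sin θ : ℂ) * (exp r : ℂ) ^ 2
      + Complex.I * (cos θ : ℂ) * (exp r : ℂ)) * hsc
    + (sin θ : ℂ) * (exp r : ℂ) ^ 2 * Complex.I_sq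

lemma rotation_smul_expI_re (r θ : ℝ) : (rotation θ • expI r).re =
    (1 - exp r ^ 2) * sin θ * cos θ / (cos θ ^ 2 + exp r ^ 2 * sin θ ^ 2) := by
  rw [← coe_re, coe_rotation_smul_expI, Complex.div_ofReal_re]
  simp [← Complex.ofReal_pow, -Complex.ofReal_sin, -Complex.ofReal_cos, -Complex.ofReal_exp]

lemma rotation_smul_expI_im (r θ : ℝ) : (rotation θ • expI r).im =
    exp r / (cos θ ^ 2 + exp r ^ 2 * sin θ ^ 2) := by
  rw [← coe_im, coe_rotation_smul_expI, Complex.div_ofReal_im]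
  simp [← Complex.ofReal_pow, -Complex.ofReal_sin, -Complex.ofReal_cos, -Complex.ofReal_exp]

lemma cosh_dist_expI_rotation_smul (r θ : ℝ) :
    cosh (dist (expI r) (rotation θ • expI r)) = 1 + 2 * sinh r ^ 2 * sin θ ^ 2 := by
  have hQ := (cos_sq_add_mul_sin_sq_pos (pow_pos (exp_pos r) 2) θ).ne'
  have hE := (exp_pos r).ne'
  rw [cosh_dist', rotation_smul_expI_re, rotation_smul_expI_im, expI_re, expI_im, sinh_eq, exp_neg]
  field_simp
  linear_combination (exp r ^ 2 * (cos θ ^ 2 - 1 - sin θ ^ 2) + 2 * exp r ^ 4 * sin θ ^ 2) *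
    sin_sq_add_cos_sq θ

lemma dist_I_rotation_smul_expI {r : ℝ} (hr : 0 ≤ r) (θ : ℝ) :
    dist I (rotation θ • expI r) = r := by
  conv_lhs => rw [← rotation_smul_I θ]
  rw [dist_smul, dist_I_expI hr]

lemma sq_re_add_sq_im_of_dist_I {w : ℍ} {r : ℝ} (hw : dist I w = r) :
    w.re ^ 2 + w.im ^ 2 + 1 = 2 * cosh r * w.im := by
  have h := cosh_dist' I w
  rw [hw, I_re, I_im] at h
  rw [h]
  field_simp [w.im_pos.ne']
  ring

lemma exists_rotation_smul_expI_im_eq {r y : ℝ} (hr : 0 < r) (hy : y ≤ exp r)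
    (hy' : 1 ≤ exp r * y) : ∃ θ, (rotation θ • expI r).im = y := by
  have hE1 : 1 < exp r := one_lt_exp_iff.2 hr
  have hy0 : 0 < y := pos_of_mul_pos_right (by linarith) (exp_pos r).le
  set t := (exp r / y - 1) / (exp r ^ 2 - 1)
  have ht : t * (exp r ^ 2 - 1) = exp r / y - 1 := div_mul_cancel₀ _ (by nlinarith)
  have ht0 : 0 ≤ t := div_nonneg (by rw [sub_nonneg, one_le_div hy0]; exact hy) (by nlinarith)
  have ht1 : t ≤ 1 := by
    rw [div_le_one (by nlinarith), div_sub_one hy0.ne', div_le_iff₀ hy0]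
    nlinarith
  obtain ⟨θ, hsin⟩ : ∃ θ, sin θ ^ 2 = t :=
    ⟨arcsin √t, by rw [sin_arcsin (by linarith [sqrt_nonneg t]) (sqrt_le_one.2 ht1), sq_sqrt ht0]⟩
  refine ⟨θ, ?_⟩
  have hQ : cos θ ^ 2 + exp r ^ 2 * sin θ ^ 2 = exp r / y := by
    rw [cos_sq', hsin]; linear_combination ht
  rw [rotation_smul_expI_im, hQ]
  field_simp

lemma exists_rotation_smul_expI_eq {r : ℝ} (hr : 0 < r) {w : ℍ} (hw : dist I w = r) :
    ∃ θ, rotation θ • expI r = w := by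
  -- Match the imaginary parts; both points then lie on the same Euclidean circle, so their real
  -- parts agree up to sign, and `θ ↦ -θ` flips that sign.
  have him_le : w.im ≤ exp r := by
    have := im_le_im_mul_exp_dist w I
    rwa [I_im, one_mul, dist_comm, hw] at this
  have him_ge : 1 ≤ exp r * w.im := by
    have := im_div_exp_dist_le I w
    rw [hw, I_im, div_le_iff₀ (exp_pos r)] at this
    linarith
  obtain ⟨θ, him⟩ := exists_rotation_smul_expI_im_eq hr him_le him_ge
  have hre : (rotation θ • expI r).re ^ 2 = w.re ^ 2 := by
    have h := sq_re_add_sq_im_of_dist_I (dist_I_rotation_smul_expI hr.le θ)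
    rw [him] at h
    linarith [sq_re_add_sq_im_of_dist_I hw]
  rcases sq_eq_sq_iff_eq_or_eq_neg.1 hre with h | h
  · exact ⟨θ, ext_re_im h him⟩
  · refine ⟨-θ, ext_re_im ?_ ?_⟩
    · rw [rotation_smul_expI_re, sin_neg, cos_neg, neg_sq, ← neg_inj, ← h, rotation_smul_expI_re]
      ring
    · rw [rotation_smul_expI_im, sin_neg, cos_neg, neg_sq, ← him, rotation_smul_expI_im]

section Sphere

def sphereParam (x : ℍ) (r θ : ℝ) : ℍ := (x.toSL2R * rotation θ) • expI r

def rotationAbout (x : ℍ) (θ : ℝ) : ℍ ≃ᵢ ℍ :=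
  IsometryEquiv.constSMul (x.toSL2R * rotation θ * x.toSL2R⁻¹)

variable (x : ℍ) {r : ℝ}

lemma rotationAbout_apply_self (θ : ℝ) : rotationAbout x θ x = x := by
  change (x.toSL2R * rotation θ * x.toSL2R⁻¹) • x = x
  rw [mul_smul, mul_smul, inv_smul_eq_iff.2 (toSL2R_smul_I x).symm, rotation_smul_I,
    toSL2R_smul_I]

lemma rotationAbout_sphereParam (t s : ℝ) :
    rotationAbout x t (sphereParam x r s) = sphereParam x r (t + s) := by
  change (x.toSL2R * rotation t * x.toSL2R⁻¹) • (x.toSL2R * rotation s) • expI r = _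
  rw [smul_smul, sphereParam, rotation_add]
  group

lemma cosh_dist_sphereParam (a b : ℝ) :
    cosh (dist (sphereParam x r a) (sphereParam x r b)) = 1 + 2 * sinh r ^ 2 * sin (b - a) ^ 2 := by
  have hb : rotation b = rotation a * rotation (b - a) := by rw [← rotation_add, add_sub_cancel]
  rw [sphereParam, sphereParam, hb, mul_smul, mul_smul, dist_smul, mul_smul, dist_smul,
    cosh_dist_expI_rotation_smul]

lemma sphereParam_eq_of_sin_eq_zero {a b : ℝ} (h : sin (b - a) = 0) :
    sphereParam x r a = sphereParam x r b := by
  have hd := cosh_dist_sphereParam x (r := r) a b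
  rw [h, zero_pow two_ne_zero, mul_zero, add_zero] at hd
  by_contra hne
  exact (one_lt_cosh.2 (dist_ne_zero.2 hne)).ne' hd

lemma sphereParam_periodic : Function.Periodic (sphereParam x r) π := fun θ ↦
  (sphereParam_eq_of_sin_eq_zero x (by rw [add_sub_cancel_left, sin_pi])).symm

lemma sin_eq_zero_of_sphereParam_eq (hr : 0 < r) {a b : ℝ}
    (h : sphereParam x r a = sphereParam x r b) : sin (b - a) = 0 := by
  have hd := cosh_dist_sphereParam x (r := r) a b
  rw [h, dist_self, cosh_zero] at hd
  have : sinh r ≠ 0 := (sinh_pos_iff.2 hr).ne'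
  simpa [this] using hd

lemma injOn_sphereParam (hr : 0 < r) (c : ℝ) : Set.InjOn (sphereParam x r) (Set.Ico c (c + π)) := by
  intro a ha b hb h
  have := (sin_eq_zero_iff_of_lt_of_lt (by linarith [ha.2, hb.1]) (by linarith [ha.1, hb.2])).1
    (sin_eq_zero_of_sphereParam_eq x hr h)
  linarith

lemma continuous_sphereParam : Continuous (sphereParam x r) :=
  (continuous_const.mul continuous_rotation).smul continuous_const

lemma sphere_subset_image_sphereParam (hr : 0 < r) (c : ℝ) :
    {w | dist x w = r} ⊆ sphereParam x r '' Set.Ico c (c + π) := by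
  intro w hw
  have hw' : dist I (x.toSL2R⁻¹ • w) = r := by
    rw [← dist_smul x.toSL2R, toSL2R_smul_I, smul_inv_smul]
    exact hw
  obtain ⟨θ, hθ⟩ := exists_rotation_smul_expI_eq hr hw'
  refine ⟨toIcoMod pi_pos c θ, toIcoMod_mem_Ico _ _ _, ?_⟩
  rw [← self_sub_toIcoDiv_zsmul, (sphereParam_periodic x).sub_zsmul_eq, sphereParam, mul_smul, hθ,
    smul_inv_smul]

lemma setOf_dist_sphereParam_lt_subset (hr : 0 < r) {h t : ℝ} (hh : 0 ≤ h) (hh2 : h ≤ π / 2)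
    (ht : cosh t ≤ 1 + 2 * sinh r ^ 2 * sin h ^ 2) (φ : ℝ) :
    {w | dist (sphereParam x r φ) w < t} ⊆ sphereParam x r '' Set.Ico (φ - h) φ ∪
      sphereParam x r '' Set.Ico φ (φ + h) ∪ {w | dist x w = r}ᶜ := by
  intro w hw
  by_cases hwS : dist x w = r
  swap
  · exact Or.inr hwS
  obtain ⟨θ, hθ, rfl⟩ := sphere_subset_image_sphereParam x hr (φ - h) hwS
  rcases lt_or_ge θ φ with h1 | h1
  · exact Or.inl (Or.inl ⟨θ, ⟨hθ.1, h1⟩, rfl⟩)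
  rcases lt_or_ge θ (φ + h) with h2 | h2
  · exact Or.inl (Or.inr ⟨θ, ⟨h1, h2⟩, rfl⟩)
  have hsin : sin h ≤ sin (θ - φ) :=
    sin_le_sin_of_le_of_le_pi_sub hh (by linarith) (by linarith [hθ.2])
  have hcosh : cosh t ≤ cosh (dist (sphereParam x r φ) (sphereParam x r θ)) := by
    rw [cosh_dist_sphereParam]
    have := pow_le_pow_left₀ (sin_nonneg_of_nonneg_of_le_pi hh (by linarith)) hsin 2
    exact ht.trans (by gcongr)
  have hle := cosh_le_cosh.1 hcosh
  rw [abs_of_nonneg dist_nonneg] at hle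
  exact absurd hw (not_lt.2 ((le_abs_self t).trans hle))

end Sphere

section Measure

open scoped ENNReal

variable [MeasurableSpace ℍ] (x : ℍ) {r : ℝ} {ν : Measure ℍ}

lemma ae_dist_le [SFinite ν] (hsupp : ν {y | dist x y = r}ᶜ = 0) :
    ∀ᵐ p ∂(ν.prod ν), dist p.1 p.2 ≤ 2 * r := by
  have hS : ∀ᵐ y ∂ν, dist x y = r := mem_ae_iff.2 hsupp
  filter_upwards [Measure.quasiMeasurePreserving_fst.ae hS,
    Measure.quasiMeasurePreserving_snd.ae hS] with p h1 h2
  calc dist p.1 p.2 ≤ dist x p.1 + dist x p.2 := dist_triangle_left _ _ _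
    _ = 2 * r := by rw [h1, h2, two_mul]

variable [BorelSpace ℍ]

lemma measurableSet_image_sphereParam_Ico (hr : 0 < r) {a b : ℝ} (hab : b ≤ a + π) :
    MeasurableSet (sphereParam x r '' Set.Ico a b) :=
  measurableSet_Ico.image_of_continuousOn_injOn (continuous_sphereParam x).continuousOn
    ((injOn_sphereParam x hr a).mono (Set.Ico_subset_Ico_right hab))

lemma measure_image_sphereParam_Ico_add (hrot : ∀ f : ℍ ≃ᵢ ℍ, f x = x → ν.map f = ν)
    (a b t : ℝ) :
    ν (sphereParam x r '' Set.Ico (t + a) (t + b)) = ν (sphereParam x r '' Set.Ico a b) := by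
  set f := rotationAbout x t
  have himage :
      f '' (sphereParam x r '' Set.Ico a b) = sphereParam x r '' Set.Ico (t + a) (t + b) := by
    rw [Set.image_image, ← Set.image_const_add_Ico, Set.image_image]
    simp only [f, rotationAbout_sphereParam]
  calc ν (sphereParam x r '' Set.Ico (t + a) (t + b))
      = ν.map f (sphereParam x r '' Set.Ico (t + a) (t + b)) := by
        rw [hrot f (rotationAbout_apply_self x t)]
    _ = ν (f ⁻¹' (sphereParam x r '' Set.Ico (t + a) (t + b))) :=
        f.toHomeomorph.measurableEmbedding.map_apply ν _
    _ = ν (sphereParam x r '' Set.Ico a b) := by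
        rw [← himage, Set.preimage_image_eq _ f.injective]

lemma measure_image_sphereParam_Ico_le (hrot : ∀ f : ℍ ≃ᵢ ℍ, f x = x → ν.map f = ν)
    [IsProbabilityMeasure ν] (hr : 0 < r) {N : ℕ} (hN : 0 < N) (a : ℝ) :
    ν (sphereParam x r '' Set.Ico a (a + π / N)) ≤ (N : ℝ≥0∞)⁻¹ := by
  set h := π / N
  have hh : 0 < h := by positivity
  have hNh : N * h = π := mul_div_cancel₀ π (by positivity)
  have hhπ : h ≤ π := by
    rw [← hNh]; exact le_mul_of_one_le_left hh.le (by exact_mod_cast hN)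
  set s : ℕ → Set ℍ := fun j ↦ sphereParam x r '' Set.Ico (j * h + a) (j * h + (a + h))
  have hs0 : s 0 = sphereParam x r '' Set.Ico a (a + h) := by simp [s]
  have hwindow : ∀ j < N, Set.Ico (j * h + a) (j * h + (a + h)) ⊆ Set.Ico a (a + π) := by
    intro j hj
    have : (j + 1 : ℝ) * h ≤ π := by
      rw [← hNh]; gcongr; exact_mod_cast hj
    exact Set.Ico_subset_Ico (le_add_of_nonneg_left (by positivity)) (by linarith)
  rw [← hs0]
  refine measure_le_inv_of_pairwiseDisjoint (fun j _ ↦ ?_) ?_ (fun j _ ↦ ?_)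
  · exact measurableSet_image_sphereParam_Ico x hr (by linarith)
  · intro i hi j hj hij
    rw [Finset.coe_range, Set.mem_Iio] at hi hj
    rw [Function.onFun, Set.disjoint_left]
    rintro _ ⟨θ, hθi, rfl⟩ ⟨θ', hθj, hθ⟩
    obtain rfl := injOn_sphereParam x hr a (hwindow j hj hθj) (hwindow i hi hθi) hθ
    have h1 : (i : ℝ) * h < (j + 1) * h := by linarith [hθi.1, hθj.2]
    have h2 : (j : ℝ) * h < (i + 1) * h := by linarith [hθj.1, hθi.2]
    have : i < j + 1 := by exact_mod_cast lt_of_mul_lt_mul_right h1 hh.le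
    have : j < i + 1 := by exact_mod_cast lt_of_mul_lt_mul_right h2 hh.le
    omega
  · rw [hs0]
    exact measure_image_sphereParam_Ico_add x hrot _ _ _

lemma measure_dist_lt_le [IsProbabilityMeasure ν] (hsupp : ν {y | dist x y = r}ᶜ = 0)
    (hrot : ∀ f : ℍ ≃ᵢ ℍ, f x = x → ν.map f = ν) (hr : 0 < r) {N : ℕ} (hN : 2 ≤ N) {t : ℝ}
    (ht : cosh t ≤ 1 + 2 * sinh r ^ 2 * sin (π / N) ^ 2) {z : ℍ} (hz : dist x z = r) :
    ν {w | dist z w < t} ≤ 2 * (N : ℝ≥0∞)⁻¹ := by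
  have harc (a : ℝ) := measure_image_sphereParam_Ico_le x hrot hr (by omega : 0 < N) a
  obtain ⟨φ, -, rfl⟩ := sphere_subset_image_sphereParam x hr 0 hz
  calc ν {w | dist (sphereParam x r φ) w < t}
      ≤ ν (sphereParam x r '' Set.Ico (φ - π / N) φ) +
          ν (sphereParam x r '' Set.Ico φ (φ + π / N)) + ν {y | dist x y = r}ᶜ :=
        (measure_mono (setOf_dist_sphereParam_lt_subset x hr (by positivity)
          (div_le_div_of_nonneg_left pi_pos.le two_pos (by exact_mod_cast hN)) ht φ)).trans <|
          (measure_union_le _ _).trans (by gcongr; exact measure_union_le _ _)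
    _ ≤ (N : ℝ≥0∞)⁻¹ + (N : ℝ≥0∞)⁻¹ + 0 := by
        rw [hsupp]
        gcongr
        · simpa using harc (φ - π / N)
        · exact harc φ
    _ = 2 * (N : ℝ≥0∞)⁻¹ := by rw [add_zero, two_mul]

variable [IsProbabilityMeasure ν] (hsupp : ν {y | dist x y = r}ᶜ = 0)
include hsupp

lemma integrable_dist : Integrable (fun p : ℍ × ℍ ↦ dist p.1 p.2) (ν.prod ν) :=
  .of_bound continuous_dist.aestronglyMeasurable (2 * r) <|
    (ae_dist_le x hsupp).mono fun p hp ↦ by rwa [norm_of_nonneg dist_nonneg]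

lemma integral_dist_le : ∫ p, dist p.1 p.2 ∂(ν.prod ν) ≤ 2 * r := by
  have h : ‖∫ p, dist p.1 p.2 ∂(ν.prod ν)‖ ≤ 2 * r * (ν.prod ν).real Set.univ :=
    norm_integral_le_of_norm_le_const <|
      (ae_dist_le x hsupp).mono fun p hp ↦ by rwa [norm_of_nonneg dist_nonneg]
  rw [probReal_univ, mul_one] at h
  exact (le_abs_self _).trans h

variable (hrot : ∀ f : ℍ ≃ᵢ ℍ, f x = x → ν.map f = ν) (hr : 0 < r) {N : ℕ} (hN : 2 ≤ N) {t : ℝ}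
  (ht : cosh t ≤ 1 + 2 * sinh r ^ 2 * sin (π / N) ^ 2)
include hrot hr hN ht

lemma measure_prod_dist_lt_le : ν.prod ν {p | dist p.1 p.2 < t} ≤ 2 * (N : ℝ≥0∞)⁻¹ := by
  have hS : ∀ᵐ y ∂ν, dist x y = r := mem_ae_iff.2 hsupp
  rw [Measure.prod_apply (measurableSet_lt continuous_dist.measurable measurable_const)]
  calc ∫⁻ z, ν (Prod.mk z ⁻¹' {p | dist p.1 p.2 < t}) ∂ν ≤ ∫⁻ _, 2 * (N : ℝ≥0∞)⁻¹ ∂ν :=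
        lintegral_mono_ae <| hS.mono fun z hz ↦
          measure_dist_lt_le x hsupp hrot hr hN ht hz
    _ = 2 * (N : ℝ≥0∞)⁻¹ := by rw [lintegral_const, measure_univ, mul_one]

lemma le_integral_dist (ht0 : 0 ≤ t) : t * (1 - 2 / N) ≤ ∫ p, dist p.1 p.2 ∂(ν.prod ν) := by
  have hmeas : MeasurableSet {p : ℍ × ℍ | dist p.1 p.2 < t} :=
    measurableSet_lt continuous_dist.measurable measurable_const
  have hbad : (ν.prod ν).real {p | dist p.1 p.2 < t} ≤ 2 / N := by
    have h := ENNReal.toReal_mono (ENNReal.mul_ne_top (by simp) (by simp; omega))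
      (measure_prod_dist_lt_le x hsupp hrot hr hN ht)
    rwa [ENNReal.toReal_mul, ENNReal.toReal_inv, ENNReal.toReal_natCast, ENNReal.toReal_ofNat,
      ← div_eq_mul_inv] at h
  have hgood : 1 - 2 / N ≤ (ν.prod ν).real {p | t ≤ dist p.1 p.2} := by
    have : {p : ℍ × ℍ | t ≤ dist p.1 p.2} = {p | dist p.1 p.2 < t}ᶜ := by ext; simp
    rw [this, probReal_compl_eq_one_sub hmeas]
    linarith
  calc t * (1 - 2 / N) ≤ t * (ν.prod ν).real {p | t ≤ dist p.1 p.2} := by gcongr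
    _ ≤ ∫ p, dist p.1 p.2 ∂(ν.prod ν) :=
        mul_meas_ge_le_integral_of_nonneg (ae_of_all _ fun _ ↦ dist_nonneg)
          (integrable_dist x hsupp) t

end Measure

section Family

variable [MeasurableSpace ℍ] [BorelSpace ℍ] {x : ℍ} {ν : ℝ → Measure ℍ}
  (hprob : ∀ r > 0, IsProbabilityMeasure (ν r)) (hsupp : ∀ r > 0, ν r {y | dist x y = r}ᶜ = 0)
include hprob hsupp

lemma eventually_integral_dist_div_le :
    ∀ᶠ r in atTop, (∫ p, dist p.1 p.2 ∂((ν r).prod (ν r))) / r ≤ 2 := by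
  filter_upwards [eventually_gt_atTop 0] with r hr
  have := hprob r hr
  rw [div_le_iff₀ hr]
  exact integral_dist_le x (hsupp r hr)

lemma eventually_le_integral_dist_div
    (hrot : ∀ r > 0, ∀ f : ℍ ≃ᵢ ℍ, f x = x → (ν r).map f = ν r) {N : ℕ} (hN : 2 ≤ N) :
    ∀ᶠ r in atTop, 2 - 5 / N ≤ (∫ p, dist p.1 p.2 ∂((ν r).prod (ν r))) / r := by
  have hN' : (2 : ℝ) ≤ N := by exact_mod_cast hN
  have hN1 : 1 / (N : ℝ) ≤ 1 / 2 := one_div_le_one_div_of_le two_pos hN'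
  have hsin : 0 < sin (π / N) :=
    sin_pos_of_pos_of_lt_pi (by positivity) (div_lt_self pi_pos (by linarith))
  have ha : |2 - 1 / (N : ℝ)| < 2 :=
    abs_lt.2 ⟨by linarith, by linarith [one_div_pos.2 (by linarith : (0 : ℝ) < N)]⟩
  filter_upwards [eventually_gt_atTop 0,
    eventually_cosh_mul_le_mul_sinh_sq ha (by positivity : 0 < 2 * sin (π / N) ^ 2)]
    with r hr hcosh
  have := hprob r hr
  have h := le_integral_dist x (hsupp r hr) (hrot r hr) hr hN (t := (2 - 1 / N) * r)
    (by linarith) (by nlinarith)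
  have hexpand : (2 - 1 / (N : ℝ)) * r * (1 - 2 / N) = (2 - 5 / N) * r + 2 * r / N ^ 2 := by
    field_simp
    ring
  rw [le_div_iff₀ hr]
  refine le_trans ?_ h
  rw [hexpand]
  exact le_add_of_nonneg_right (by positivity)

end Family

end

end UpperHalfPlane

/-- statistical hyperbolicity of the hyperbolic plane: for the rotation-invariant
(i.e. invariant under all isometries fixing the centre) probability measures `ν_r` on the
metric spheres `S_r(x)` in `ℍ²`, the average distance between pairs of points on `S_r(x)`,
normalized by `r`, tends to `2` as `r → ∞`. -/
theorem stmt13 [MeasurableSpace UpperHalfPlane] [BorelSpace UpperHalfPlane] (x : UpperHalfPlane) (ν : ℝ → Measure UpperHalfPlane)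
    (hprob : ∀ r > 0, IsProbabilityMeasure (ν r))
    (hsupp : ∀ r > 0, ν r {y | dist x y = r}ᶜ = 0)
    (hrot : ∀ r > 0, ∀ f : UpperHalfPlane ≃ᵢ UpperHalfPlane, f x = x →
      Measure.map f (ν r) = ν r) :
    Tendsto (fun r : ℝ =>
        (∫ z : UpperHalfPlane × UpperHalfPlane, dist z.1 z.2 ∂((ν r).prod (ν r))) / r)
      atTop (nhds 2) := by
  refine tendsto_order.2 ⟨fun a ha ↦ ?_, fun a ha ↦
    (eventually_integral_dist_div_le hprob hsupp).mono fun r hr ↦ hr.trans_lt ha⟩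
  obtain ⟨N, hN⟩ := exists_nat_gt (max 2 (5 / (2 - a)))
  have h2N : (2 : ℝ) ≤ N := (le_max_left _ _).trans hN.le
  have h5N : 5 / (N : ℝ) < 2 - a := by
    rw [div_lt_iff₀ (by linarith), mul_comm, ← div_lt_iff₀ (sub_pos.2 ha)]
    exact (le_max_right _ _).trans_lt hN
  exact (eventually_le_integral_dist_div hprob hsupp hrot (by exact_mod_cast h2N)).mono
    fun r hr ↦ (by linarith : a < 2 - 5 / N).trans_le hr
end
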